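/- arXiv:2210.04652 — 2 statements merged into one kernel-verified Lean document; each statement's English description precedes it below -/
import Mathlib

section
/- For the Static Black-Peg AB Game with 2 pegs and c ≥ 2 colors: a feasible strategy cannot contain four (1,1)-questions. -/
/-- The answer of a question `Q` to a secret `S`: the number of pegs where they agree. -/
def answer {p c : ℕ} (Q S : Fin p → Fin c) : ℕ :=
  (Finset.univ.filter fun i => Q i = S i).card

/-- A strategy (a list of pairwise distinct injective codes) is feasible if the list of
answers determines every injective secret uniquely. -/
def Feasible {p c : ℕ} (qs : List (Fin p → Fin c)) : Prop :=
  qs.Nodup ∧ (∀ Q ∈ qs, Function.Injective Q) ∧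
    ∀ S S' : Fin p → Fin c, Function.Injective S → Function.Injective S' →
      qs.map (fun Q => answer Q S) = qs.map (fun Q => answer Q S') → S = S'

/-- The number of questions of the strategy `qs` having color `q` on peg `i`. -/
def occ {p c : ℕ} (qs : List (Fin p → Fin c)) (i : Fin p) (q : Fin c) : ℕ :=
  qs.countP fun Q => decide (Q i = q)

/-!
If `P` and `Q` are (1,1)-questions with `P 0 ≠ Q 1` and `Q 0 ≠ P 1`, the secrets `(P 0, Q 1)`
and `(Q 0, P 1)` get the same answers: `1` from `P` and from `Q`, `0` from every other question.
So any two (1,1)-questions are linked by `P 0 = Q 1` or `Q 0 = P 1`. As the (1,1)-questions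
have pairwise distinct colors on each peg, `n` of them carry at most `n` links, while all
`n (n - 1) / 2` pairs must be linked; hence `n ≤ 3`.
-/

open Finset

theorem card_le_three_of_forall_linked {α β : Type*} [DecidableEq α] [DecidableEq β]
    (s : Finset β) (a b : β → α) (hb : Set.InjOn b s)
    (hlinked : ∀ x ∈ s, ∀ y ∈ s, x ≠ y → a x = b y ∨ a y = b x) :
    #s ≤ 3 := by
  set links := s.offDiag.filter fun p => a p.1 = b p.2
  have hlinks : #links ≤ #s := by
    refine card_le_card_of_injOn Prod.fst (fun p hp => (mem_offDiag.1 (mem_filter.1 hp).1).1) ?_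
    intro p hp q hq hpq
    simp only [links, coe_filter, mem_offDiag, Set.mem_ofPred_eq] at hp hq
    exact Prod.ext hpq (hb hp.1.2.1 hq.1.2.1 (hp.2.symm.trans (hpq ▸ hq.2)))
  have hcover : s.offDiag ⊆ links ∪ links.image Prod.swap := by
    rintro ⟨x, y⟩ hxy
    obtain ⟨hx, hy, hne⟩ := mem_offDiag.1 hxy
    rcases hlinked x hx y hy hne with h | h
    · exact mem_union_left _ (mem_filter.2 ⟨hxy, h⟩)
    · refine mem_union_right _ (mem_image.2 ⟨(y, x), mem_filter.2 ⟨?_, h⟩, rfl⟩)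
      exact mem_offDiag.2 ⟨hy, hx, hne.symm⟩
  have hcard : #s * #s - #s ≤ 2 * #s := calc
    #s * #s - #s = #s.offDiag := (offDiag_card s).symm
    _ ≤ #links + #(links.image Prod.swap) := (card_le_card hcover).trans (card_union_le _ _)
    _ ≤ #links + #links := Nat.add_le_add_left card_image_le _
    _ ≤ 2 * #s := by omega
  by_contra! h
  have : 4 * #s ≤ #s * #s := Nat.mul_le_mul_right _ h
  omega

section Mastermind

variable {p c : ℕ}

theorem eq_of_occ_eq_one {qs : List (Fin p → Fin c)} {i : Fin p} {P R : Fin p → Fin c}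
    (hP : P ∈ qs) (hocc : occ qs i (P i) = 1) (hR : R ∈ qs) (h : R i = P i) : R = P := by
  rw [occ, List.countP_eq_length_filter, List.length_eq_one_iff] at hocc
  obtain ⟨x, hx⟩ := hocc
  have hPx : P ∈ qs.filter fun Q => decide (Q i = P i) := List.mem_filter.2 ⟨hP, by simp⟩
  have hRx : R ∈ qs.filter fun Q => decide (Q i = P i) := List.mem_filter.2 ⟨hR, by simp [h]⟩
  rw [hx, List.mem_singleton] at hPx hRx
  rw [hPx, hRx]

theorem apply_eq_iff_of_occ_eq_one {qs : List (Fin p → Fin c)} {i : Fin p} {P R : Fin p → Fin c}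
    (hP : P ∈ qs) (hocc : occ qs i (P i) = 1) (hR : R ∈ qs) : R i = P i ↔ R = P :=
  ⟨eq_of_occ_eq_one hP hocc hR, fun h => h ▸ rfl⟩

theorem answer_fin_two (R S : Fin 2 → Fin c) :
    answer R S = (if R 0 = S 0 then 1 else 0) + (if R 1 = S 1 then 1 else 0) := by
  rw [answer, card_filter, Fin.sum_univ_two]

theorem injective_vecCons_of_ne {α : Type*} {x y : α} (h : x ≠ y) : Function.Injective ![x, y] := by
  intro i j hij
  fin_cases i <;> fin_cases j <;> simp_all

def IsOneOneQuestion (qs : List (Fin 2 → Fin c)) (Q : Fin 2 → Fin c) : Prop :=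
  occ qs 0 (Q 0) = 1 ∧ occ qs 1 (Q 1) = 1

theorem IsOneOneQuestion.linked {qs : List (Fin 2 → Fin c)} (hqs : Feasible qs)
    {P Q : Fin 2 → Fin c} (hP : P ∈ qs) (hQ : Q ∈ qs)
    (hP11 : IsOneOneQuestion qs P) (hQ11 : IsOneOneQuestion qs Q) (hne : P ≠ Q) :
    P 0 = Q 1 ∨ Q 0 = P 1 := by
  by_contra! h
  have hsame :
      qs.map (fun R => answer R ![P 0, Q 1]) = qs.map (fun R => answer R ![Q 0, P 1]) := by
    refine List.map_congr_left fun R hR => ?_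
    simp only [answer_fin_two, Matrix.cons_val_zero, Matrix.cons_val_one,
      apply_eq_iff_of_occ_eq_one hP hP11.1 hR, apply_eq_iff_of_occ_eq_one hP hP11.2 hR,
      apply_eq_iff_of_occ_eq_one hQ hQ11.1 hR, apply_eq_iff_of_occ_eq_one hQ hQ11.2 hR]
    omega
  have hS := hqs.2.2 _ _ (injective_vecCons_of_ne h.1) (injective_vecCons_of_ne h.2) hsame
  exact hne (eq_of_occ_eq_one hQ hQ11.1 hP (congrFun hS 0))

end Mastermind

theorem statement8_general (c : ℕ) (qs : List (Fin 2 → Fin c))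
    (hqs : Feasible qs) :
    ¬ ∃ Q₁ Q₂ Q₃ Q₄ : Fin 2 → Fin c,
      Q₁ ∈ qs ∧ Q₂ ∈ qs ∧ Q₃ ∈ qs ∧ Q₄ ∈ qs ∧
      Q₁ ≠ Q₂ ∧ Q₁ ≠ Q₃ ∧ Q₁ ≠ Q₄ ∧ Q₂ ≠ Q₃ ∧ Q₂ ≠ Q₄ ∧ Q₃ ≠ Q₄ ∧
      (occ qs 0 (Q₁ 0) = 1 ∧ occ qs 1 (Q₁ 1) = 1) ∧
      (occ qs 0 (Q₂ 0) = 1 ∧ occ qs 1 (Q₂ 1) = 1) ∧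
      (occ qs 0 (Q₃ 0) = 1 ∧ occ qs 1 (Q₃ 1) = 1) ∧
      (occ qs 0 (Q₄ 0) = 1 ∧ occ qs 1 (Q₄ 1) = 1) := by
  classical
  rintro ⟨Q₁, Q₂, Q₃, Q₄, h₁, h₂, h₃, h₄, n₁₂, n₁₃, n₁₄, n₂₃, n₂₄, n₃₄, o₁, o₂, o₃, o₄⟩
  set T := qs.toFinset.filter (IsOneOneQuestion qs)
  have hT : ∀ {Q}, Q ∈ T ↔ Q ∈ qs ∧ IsOneOneQuestion qs Q := by
    simp [T]
  have hle : #T ≤ 3 := card_le_three_of_forall_linked T (· 0) (· 1)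
    (fun P hP R hR h => eq_of_occ_eq_one (hT.1 hR).1 (hT.1 hR).2.2 (hT.1 hP).1 h)
    (fun P hP Q hQ hne => (hT.1 hP).2.linked hqs (hT.1 hP).1 (hT.1 hQ).1 (hT.1 hQ).2 hne)
  have hsub : {Q₁, Q₂, Q₃, Q₄} ⊆ T := by
    simp only [insert_subset_iff, singleton_subset_iff, hT]
    exact ⟨⟨h₁, o₁⟩, ⟨h₂, o₂⟩, ⟨h₃, o₃⟩, ⟨h₄, o₄⟩⟩
  have hfour : #({Q₁, Q₂, Q₃, Q₄} : Finset _) = 4 := by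
    rw [card_insert_of_notMem (by simp [n₁₂, n₁₃, n₁₄]),
      card_insert_of_notMem (by simp [n₂₃, n₂₄]), card_pair n₃₄]
  have := card_le_card hsub
  omega

theorem statement8 (c : ℕ) (hc : 2 ≤ c) (qs : List (Fin 2 → Fin c))
    (hqs : Feasible qs) :
    ¬ ∃ Q₁ Q₂ Q₃ Q₄ : Fin 2 → Fin c,
      Q₁ ∈ qs ∧ Q₂ ∈ qs ∧ Q₃ ∈ qs ∧ Q₄ ∈ qs ∧
      Q₁ ≠ Q₂ ∧ Q₁ ≠ Q₃ ∧ Q₁ ≠ Q₄ ∧ Q₂ ≠ Q₃ ∧ Q₂ ≠ Q₄ ∧ Q₃ ≠ Q₄ ∧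
      (occ qs 0 (Q₁ 0) = 1 ∧ occ qs 1 (Q₁ 1) = 1) ∧
      (occ qs 0 (Q₂ 0) = 1 ∧ occ qs 1 (Q₂ 1) = 1) ∧
      (occ qs 0 (Q₃ 0) = 1 ∧ occ qs 1 (Q₃ 1) = 1) ∧
      (occ qs 0 (Q₄ 0) = 1 ∧ occ qs 1 (Q₄ 1) = 1) :=
  statement8_general c qs hqs
end

section
/- For the Static Black-Peg AB Game with 3 pegs and c ≥ 5 colors: a feasible strategy cannot contain four (1,1,⋆)-questions. -/
/-! Two distinct (1,1,⋆)-questions `A`, `B` of a feasible strategy satisfy `A 0 = B 1` or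
`B 0 = A 1`: otherwise, for a fifth color `x`, the secrets `(A 0, B 1, x)` and `(B 0, A 1, x)` get
the same answers. The peg-1 colors of (1,1,⋆)-questions are distinct, so at most `n` ordered pairs
of the `n` (1,1,⋆)-questions satisfy `A 0 = B 1`, while each of the `n(n-1)/2` unordered pairs
needs one; hence `n ≤ 3`. -/

open Finset

theorem Finset.card_le_three_of_injOn_of_pairwise {β α : Type*}
    {s : Finset β} {a b : β → α} (hb : Set.InjOn b s)
    (h : (s : Set β).Pairwise fun j k => a j = b k ∨ a k = b j) : #s ≤ 3 := by
  classical
  set E := s.offDiag.filter fun jk => a jk.1 = b jk.2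
  have hE : #E ≤ #s := by
    refine card_le_card_of_injOn Prod.fst (fun jk hjk => ?_) fun jk hjk jk' hjk' hfst => ?_
    · exact (mem_offDiag.1 (mem_filter.1 hjk).1).1
    · simp only [E, coe_filter, mem_offDiag, Set.mem_ofPred_eq] at hjk hjk'
      refine Prod.ext hfst (hb hjk.1.2.1 hjk'.1.2.1 ?_)
      rw [← hjk.2, ← hjk'.2, hfst]
  have hcover : s.offDiag ⊆ E ∪ E.image Prod.swap := by
    rintro ⟨j, k⟩ hjk
    obtain ⟨hj, hk, hne⟩ := mem_offDiag.1 hjk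
    rcases h hj hk hne with hjk' | hkj
    · exact mem_union_left _ (mem_filter.2 ⟨hjk, hjk'⟩)
    · exact mem_union_right _
        (mem_image.2 ⟨(k, j), mem_filter.2 ⟨mem_offDiag.2 ⟨hk, hj, hne.symm⟩, hkj⟩, rfl⟩)
  have hcount : #s * #s - #s ≤ 2 * #s :=
    calc #s * #s - #s = #s.offDiag := (offDiag_card s).symm
      _ ≤ #(E ∪ E.image Prod.swap) := card_le_card hcover
      _ ≤ #E + #(E.image Prod.swap) := card_union_le _ _
      _ ≤ 2 * #s := by have := card_image_le (s := E) (f := Prod.swap); omega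
  by_contra! h4
  have : 4 * #s ≤ #s * #s := Nat.mul_le_mul_right _ h4
  omega

theorem eq_of_occ_eq_one_s11 {p c : ℕ} {qs : List (Fin p → Fin c)} {i : Fin p} {v : Fin c}
    (h : occ qs i v = 1) {Q Q' : Fin p → Fin c} (hQ : Q ∈ qs) (hQ' : Q' ∈ qs)
    (hQv : Q i = v) (hQ'v : Q' i = v) : Q = Q' := by
  rw [occ, List.countP_eq_length_filter, List.length_eq_one_iff] at h
  obtain ⟨R, hR⟩ := h
  have hmem : ∀ Q ∈ qs, Q i = v → Q = R := fun Q hQ hQv => by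
    simpa [hR] using (List.mem_filter (p := fun Q => decide (Q i = v))).2 ⟨hQ, decide_eq_true hQv⟩
  rw [hmem Q hQ hQv, hmem Q' hQ' hQ'v]

theorem answer_fin_three {c : ℕ} (Q S : Fin 3 → Fin c) :
    answer Q S = (if Q 0 = S 0 then 1 else 0) + (if Q 1 = S 1 then 1 else 0)
      + (if Q 2 = S 2 then 1 else 0) := by
  rw [answer, card_filter, Fin.sum_univ_three]

theorem injective_triple_of_ne {α : Type*} {u v w : α} (huv : u ≠ v) (huw : u ≠ w) (hvw : v ≠ w) :
    Function.Injective ![u, v, w] := by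
  intro i j hij
  fin_cases i <;> fin_cases j <;> simp_all

theorem Fin.exists_ne_of_five_le {c : ℕ} (hc : 5 ≤ c) (u v w z : Fin c) :
    ∃ x, x ≠ u ∧ x ≠ v ∧ x ≠ w ∧ x ≠ z := by
  have hlt : #{u, v, w, z} < #(univ : Finset (Fin c)) := by
    rw [card_univ, Fintype.card_fin]; exact card_le_four.trans_lt hc
  obtain ⟨x, -, hx⟩ := exists_mem_notMem_of_card_lt_card hlt
  simp only [mem_insert, mem_singleton, not_or] at hx
  exact ⟨x, hx⟩

def IsOneOneStarQuestion {c : ℕ} (qs : List (Fin 3 → Fin c)) (Q : Fin 3 → Fin c) : Prop :=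
  Q ∈ qs ∧ occ qs 0 (Q 0) = 1 ∧ occ qs 1 (Q 1) = 1

namespace IsOneOneStarQuestion

variable {c : ℕ} {qs : List (Fin 3 → Fin c)} {A B : Fin 3 → Fin c}

theorem eq_of_apply_zero_eq (hA : IsOneOneStarQuestion qs A) (hB : IsOneOneStarQuestion qs B)
    (h : A 0 = B 0) : A = B :=
  eq_of_occ_eq_one_s11 hB.2.1 hA.1 hB.1 h rfl

theorem eq_of_apply_one_eq (hA : IsOneOneStarQuestion qs A) (hB : IsOneOneStarQuestion qs B)
    (h : A 1 = B 1) : A = B :=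
  eq_of_occ_eq_one_s11 hB.2.2 hA.1 hB.1 h rfl

theorem cross_eq (hc : 5 ≤ c) (hqs : Feasible qs) (hA : IsOneOneStarQuestion qs A)
    (hB : IsOneOneStarQuestion qs B) (hAB : A ≠ B) : A 0 = B 1 ∨ B 0 = A 1 := by
  by_contra! ⟨hA0B1, hB0A1⟩
  have h0 : A 0 ≠ B 0 := fun h => hAB (hA.eq_of_apply_zero_eq hB h)
  have h1 : A 1 ≠ B 1 := fun h => hAB (hA.eq_of_apply_one_eq hB h)
  obtain ⟨x, hxA0, hxB0, hxA1, hxB1⟩ := Fin.exists_ne_of_five_le hc (A 0) (B 0) (A 1) (B 1)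
  -- `A` and `B` score exactly one on pegs 0 and 1 against both secrets, other questions nothing.
  have hanswer : ∀ Q ∈ qs, answer Q ![A 0, B 1, x] = answer Q ![B 0, A 1, x] := by
    intro Q hQ
    simp only [answer_fin_three, Matrix.cons_val_zero, Matrix.cons_val_one, Matrix.cons_val_two,
      Matrix.head_cons, Matrix.tail_cons]
    by_cases hQA : Q = A
    · simp [hQA, h0, h1]
    by_cases hQB : Q = B
    · simp [hQB, h0.symm, h1.symm]
    have hQ0A : Q 0 ≠ A 0 := fun h => hQA (eq_of_occ_eq_one_s11 hA.2.1 hQ hA.1 h rfl)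
    have hQ0B : Q 0 ≠ B 0 := fun h => hQB (eq_of_occ_eq_one_s11 hB.2.1 hQ hB.1 h rfl)
    have hQ1A : Q 1 ≠ A 1 := fun h => hQA (eq_of_occ_eq_one_s11 hA.2.2 hQ hA.1 h rfl)
    have hQ1B : Q 1 ≠ B 1 := fun h => hQB (eq_of_occ_eq_one_s11 hB.2.2 hQ hB.1 h rfl)
    simp [hQ0A, hQ0B, hQ1A, hQ1B]
  have hS : ![A 0, B 1, x] = ![B 0, A 1, x] :=
    hqs.2.2 _ _ (injective_triple_of_ne hA0B1 hxA0.symm hxB1.symm)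
      (injective_triple_of_ne hB0A1 hxB0.symm hxA1.symm) (List.map_congr_left hanswer)
  exact h0 (congrFun hS 0)

end IsOneOneStarQuestion

theorem card_le_three_of_isOneOneStarQuestion {c : ℕ} (hc : 5 ≤ c) {qs : List (Fin 3 → Fin c)}
    (hqs : Feasible qs) {T : Finset (Fin 3 → Fin c)} (hT : ∀ Q ∈ T, IsOneOneStarQuestion qs Q) :
    #T ≤ 3 :=
  card_le_three_of_injOn_of_pairwise (a := (· 0))
    (fun _ hA _ hB h => (hT _ hA).eq_of_apply_one_eq (hT _ hB) h)
    fun _ hA _ hB hAB => (hT _ hA).cross_eq hc hqs (hT _ hB) hAB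

theorem statement11 (c : ℕ) (hc : 5 ≤ c) (qs : List (Fin 3 → Fin c))
    (hqs : Feasible qs) :
    ¬ ∃ Q₁ Q₂ Q₃ Q₄ : Fin 3 → Fin c,
      Q₁ ∈ qs ∧ Q₂ ∈ qs ∧ Q₃ ∈ qs ∧ Q₄ ∈ qs ∧
      Q₁ ≠ Q₂ ∧ Q₁ ≠ Q₃ ∧ Q₁ ≠ Q₄ ∧ Q₂ ≠ Q₃ ∧ Q₂ ≠ Q₄ ∧ Q₃ ≠ Q₄ ∧
      (occ qs 0 (Q₁ 0) = 1 ∧ occ qs 1 (Q₁ 1) = 1) ∧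
      (occ qs 0 (Q₂ 0) = 1 ∧ occ qs 1 (Q₂ 1) = 1) ∧
      (occ qs 0 (Q₃ 0) = 1 ∧ occ qs 1 (Q₃ 1) = 1) ∧
      (occ qs 0 (Q₄ 0) = 1 ∧ occ qs 1 (Q₄ 1) = 1) := by
  rintro ⟨Q₁, Q₂, Q₃, Q₄, h₁, h₂, h₃, h₄, h₁₂, h₁₃, h₁₄, h₂₃, h₂₄, h₃₄, o₁, o₂, o₃, o₄⟩
  have hcard : #{Q₁, Q₂, Q₃, Q₄} = 4 :=
    card_eq_four.2 ⟨Q₁, Q₂, Q₃, Q₄, h₁₂, h₁₃, h₁₄, h₂₃, h₂₄, h₃₄, rfl⟩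
  have hle := card_le_three_of_isOneOneStarQuestion hc hqs (T := {Q₁, Q₂, Q₃, Q₄}) (by
    simp only [mem_insert, mem_singleton]
    rintro Q (rfl | rfl | rfl | rfl)
    exacts [⟨h₁, o₁⟩, ⟨h₂, o₂⟩, ⟨h₃, o₃⟩, ⟨h₄, o₄⟩])
  omega
end
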